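/- Multilinearity sum identity for the shifted convolution: for m ∈ {0,1} and n ≥ 1, Σ_{j=m}^{n-1+m} det(A_m,…,A_{j-1}, \hat{B}_j, A_{j+1},…,A_{n-1+m}) = (2n−2+m) c₁ H^m_n, where \hat{B}_j has i-th entry Σ_{k=1}^{j+i} c_k c_{j+i+1−k}. -/

import Mathlib

/-- Hankel determinant `H^m_n = det(c_{i+j+m})`. -/
noncomputable def Hk (c : ℕ → ℝ) (m n : ℕ) : ℝ :=
  (Matrix.of fun i j : Fin n => c (i.val + j.val + m)).det

/-- `G^m_n`: the Hankel determinant `H^m_n` with its last row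
`(c_{m+n-1},…,c_{m+2n-2})` replaced by `(c_{m+n},…,c_{m+2n-1})`;
by convention `G^m_0 = 0`. -/
noncomputable def Gk (c : ℕ → ℝ) (m n : ℕ) : ℝ :=
  if n = 0 then 0 else
  (Matrix.of fun i j : Fin n =>
    if i.val = n - 1 then c (m + n + j.val) else c (i.val + j.val + m)).det

/-- `E^m_n`: determinant of the `n×n` matrix with rows
`(c_{m+k},…,c_{m+k+n-2}, c_{m+k+n+1})`, i.e. the last column advanced by 2. -/
noncomputable def Ek (c : ℕ → ℝ) (m n : ℕ) : ℝ :=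
  (Matrix.of fun i j : Fin n =>
    if j.val = n - 1 then c (m + i.val + n + 1) else c (m + i.val + j.val)).det

/-- `F^m_n`: determinant of the `n×n` matrix with rows
`(c_{m+k},…,c_{m+k+n-3}, c_{m+k+n-1}, c_{m+k+n})`, i.e. column `n−2` skipped;
by convention `F^m_1 = 0`. -/
noncomputable def Fk (c : ℕ → ℝ) (m n : ℕ) : ℝ :=
  if n = 1 then 0 else
  (Matrix.of fun i j : Fin n =>
    if n - 2 ≤ j.val then c (m + i.val + j.val + 1) else c (m + i.val + j.val)).det

/-- `S^m_n`: determinant of `(c_{m+σ(i)+σ(j)})` where `σ(i) = i` for `i ≤ n−2`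
and `σ(n−1) = n`. -/
noncomputable def Sk (c : ℕ → ℝ) (m n : ℕ) : ℝ :=
  (Matrix.of fun i j : Fin n =>
    c (m + (if i.val = n - 1 then n else i.val) +
        (if j.val = n - 1 then n else j.val))).det

/-!
Let `M = (c_{i+j+m})` and let `B` be the matrix whose columns are the `B̂_j`; it is the Hankel
matrix of the self-convolution `s ↦ ∑_{k=1}^{s} c_k c_{s+1-k}`. By Cramer's rule, replacing the
columns of `M` one at a time by those of `B` and summing the determinants gives
`tr (adj M · B)`. Splitting each convolution at `k = m + j` shows `B = M U_m + (M U_0)ᵀ` for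
upper triangular Toeplitz matrices `U_a` with diagonal `c₁`. As `M` is symmetric,
`tr (adj M · B) = det M · (tr U_m + tr U_0) = ((n - 1 + m) + (n - 1)) c₁ det M`.
-/

open Matrix Finset

theorem Matrix.sum_det_updateCol_eq_trace_adjugate_mul {n R : Type*} [Fintype n] [DecidableEq n]
    [CommRing R] (A B : Matrix n n R) :
    ∑ j, (A.updateCol j fun i => B i j).det = (A.adjugate * B).trace := by
  simp only [← cramer_apply, cramer_eq_adjugate_mulVec, trace, diag, mul_apply, mulVec,
    dotProduct]

theorem Matrix.trace_adjugate_mul_mul_left {n R : Type*} [Fintype n] [DecidableEq n]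
    [CommRing R] (A B : Matrix n n R) :
    (A.adjugate * (A * B)).trace = A.det * B.trace := by
  rw [← Matrix.mul_assoc, adjugate_mul, smul_mul, Matrix.one_mul, trace_smul, smul_eq_mul]

theorem Matrix.IsSymm.trace_adjugate_mul_transpose {n R : Type*} [Fintype n] [DecidableEq n]
    [CommRing R] {A : Matrix n n R} (hA : A.IsSymm) (B : Matrix n n R) :
    (A.adjugate * Bᵀ).trace = (A.adjugate * B).trace := by
  rw [← trace_transpose, transpose_mul, transpose_transpose, adjugate_transpose, hA.eq,
    trace_mul_comm]

section Hankel

variable {R : Type*}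

def hankel (c : ℕ → R) (m n : ℕ) : Matrix (Fin n) (Fin n) R :=
  of fun i j => c (i + j + m)

theorem hankel_isSymm (c : ℕ → R) (m n : ℕ) : (hankel c m n).IsSymm :=
  IsSymm.ext fun i j => by simp only [hankel, of_apply, add_comm (i : ℕ)]

variable [CommSemiring R]

def selfConv (c : ℕ → R) (s : ℕ) : R :=
  ∑ k ∈ Icc 1 s, c k * c (s + 1 - k)

theorem selfConv_add (c : ℕ → R) (a b : ℕ) :
    selfConv c (a + b)
      = ∑ k ∈ Icc 1 a, c k * c (a + b + 1 - k) + ∑ k ∈ Icc 1 b, c k * c (a + b + 1 - k) := by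
  have hIoc : ∀ x, Icc 1 x = Ioc 0 x := fun x => Icc_add_one_left_eq_Ioc 0 x
  rw [selfConv, hIoc, hIoc, hIoc,
    ← sum_Ioc_consecutive _ (Nat.zero_le a) (Nat.le_add_right a b)]
  congr 1
  refine sum_nbij' (fun k => a + b + 1 - k) (fun k => a + b + 1 - k) ?_ ?_ ?_ ?_ ?_ <;>
    simp only [mem_Ioc] <;> intro k hk
  · omega
  · omega
  · omega
  · omega
  · rw [show a + b + 1 - (a + b + 1 - k) = k by omega, mul_comm]

/-- Upper triangular Toeplitz matrix with `c 1` on the diagonal, `c 2` above it, and so on;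
for `a = 0` its first row is zero. -/
def upperToeplitz (c : ℕ → R) (a n : ℕ) : Matrix (Fin n) (Fin n) R :=
  of fun j p => if 1 ≤ a + j ∧ (j : ℕ) ≤ p then c (p + 1 - j) else 0

theorem trace_upperToeplitz (c : ℕ → R) {a : ℕ} (ha : a ≤ 1) (n : ℕ) :
    (upperToeplitz c a n).trace = (n + a - 1 : ℕ) * c 1 := by
  simp only [trace, Matrix.diag, upperToeplitz, of_apply, le_refl, and_true,
    Nat.add_sub_cancel_left]
  rw [Fin.sum_univ_eq_sum_range (fun p => if 1 ≤ a + p then c 1 else 0), ← sum_filter,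
    sum_const, nsmul_eq_mul,
    show (range n).filter (fun p => 1 ≤ a + p) = Ico (1 - a) n by ext; simp; omega,
    Nat.card_Ico]
  congr 2
  omega

theorem hankel_mul_upperToeplitz_apply (c : ℕ → R) (m : ℕ) {a : ℕ} (ha : a ≤ 1) {n : ℕ}
    (i p : Fin n) :
    (hankel c m n * upperToeplitz c a n) i p
      = ∑ k ∈ Icc 1 (a + p), c k * c (i + m + p + 1 - k) := by
  simp only [mul_apply, hankel, upperToeplitz, of_apply, mul_ite, mul_zero]
  rw [Fin.sum_univ_eq_sum_range
    (fun j => if 1 ≤ a + j ∧ j ≤ p then c (i + j + m) * c (p + 1 - j) else 0), ← sum_filter]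
  refine sum_nbij' (fun j => p + 1 - j) (fun k => p + 1 - k) ?_ ?_ ?_ ?_ ?_ <;>
    simp only [mem_filter, mem_range, mem_Icc] <;> intro k hk
  · omega
  · omega
  · omega
  · omega
  · rw [show i + m + p + 1 - (p + 1 - k) = i + k + m by omega, mul_comm]

theorem hankel_selfConv {m : ℕ} (hm : m ≤ 1) (c : ℕ → R) (n : ℕ) :
    hankel (selfConv c) m n
      = hankel c m n * upperToeplitz c m n + (hankel c m n * upperToeplitz c 0 n)ᵀ := by
  ext i p
  rw [Matrix.add_apply, transpose_apply, hankel_mul_upperToeplitz_apply c m hm,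
    hankel_mul_upperToeplitz_apply c m zero_le_one, zero_add, hankel, of_apply,
    show (i : ℕ) + p + m = m + p + i by ring, selfConv_add]
  congr 1 <;> refine sum_congr rfl fun k _ => ?_ <;> congr 2 <;> omega

end Hankel

/-- Multilinearity sum identity for the shifted convolution:
`Σ_{j=m}^{n-1+m} det(A_m,…,B̂_j,…,A_{n-1+m}) = (2n−2+m) c₁ H^m_n`, where `B̂_j`
has `i`-th entry `Σ_{k=1}^{j+i} c_k c_{j+i+1−k}`. -/
theorem sum_det_Bhat (c : ℕ → ℝ) (m : ℕ) (hm : m = 0 ∨ m = 1) (n : ℕ) (hn : 1 ≤ n) :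
    (∑ p : Fin n,
      (Matrix.of fun i q : Fin n =>
        if q = p then ∑ k ∈ Finset.Icc 1 (m + p.val + i.val),
            c k * c (m + p.val + i.val + 1 - k)
        else c (m + q.val + i.val)).det) =
      ((2 * n - 2 + m : ℕ) : ℝ) * c 1 * Hk c m n := by
  have hm1 : m ≤ 1 := by omega
  have hcol : ∀ p : Fin n, (of fun i q : Fin n =>
        if q = p then ∑ k ∈ Icc 1 (m + p.val + i.val), c k * c (m + p.val + i.val + 1 - k)
        else c (m + q.val + i.val))
      = (hankel c m n).updateCol p fun i => hankel (selfConv c) m n i p := by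
    intro p
    ext i q
    rw [updateCol_apply, of_apply]
    split_ifs
    · rw [hankel, of_apply, selfConv, show (i : ℕ) + p + m = m + p + i by ring]
    · rw [hankel, of_apply, show (i : ℕ) + q + m = m + q + i by ring]
  rw [sum_congr rfl fun p _ => congrArg det (hcol p), sum_det_updateCol_eq_trace_adjugate_mul,
    hankel_selfConv hm1, mul_add, trace_add,
    (hankel_isSymm c m n).trace_adjugate_mul_transpose, trace_adjugate_mul_mul_left,
    trace_adjugate_mul_mul_left, trace_upperToeplitz c hm1, trace_upperToeplitz c zero_le_one,
    show 2 * n - 2 + m = (n + m - 1) + (n + 0 - 1) by omega,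
    show Hk c m n = (hankel c m n).det from rfl]
  push_cast
  ring
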